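/- Let 𝓕 = {[0), [1)}. Every non-injective monoid endomorphism e of B_ω^𝓕 satisfies exactly one of: (1) e is the annihilating endomorphism γ₀ = δ₀; (2) e = γ_k for some positive integer k; (3) e = δ_k for some positive integer k. -/
import Mathlib


/-- `[a) = {x ∈ ω : x ≥ a}`. -/
def seg (a : ℕ) : Set ℕ := {x | a ≤ x}

/-- `n + F` taken within `ω`: `{x ∈ ω : x = n + k for some k ∈ F}`. -/
def shift (n : ℤ) (F : Set ℕ) : Set ℕ := {x | ∃ k ∈ F, (x : ℤ) = n + k}

/-- The carrier `B_ω × 𝒫(ω)`. -/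
abbrev BF := ℕ × ℕ × Set ℕ

/-- The multiplication on `B_ω × 𝒫(ω)`. -/
def bfMul (x y : BF) : BF :=
  if x.2.1 ≤ y.1 then
    (x.1 + (y.1 - x.2.1), y.2.1, shift ((x.2.1 : ℤ) - y.1) x.2.2 ∩ y.2.2)
  else
    (x.1, (x.2.1 - y.1) + y.2.1, x.2.2 ∩ shift ((y.1 : ℤ) - x.2.1) y.2.2)

/-- The family `𝓕 = {[0), [1)}`. -/
def Fam : Set (Set ℕ) := {seg 0, seg 1}

/-- The carrier of the monoid `B_ω^𝓕` for `𝓕 = {[0),[1)}`. -/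
def Dom : Set BF := {x | x.2.2 ∈ Fam}

/-- The map `γ_k`. -/
def gam (k : ℕ) : BF → BF := fun x => (k * x.1, k * x.2.1, seg 0)

open Classical

/-- The map `δ_k`. -/
noncomputable def del (k : ℕ) : BF → BF := fun x =>
  if x.2.2 = seg 1 then (k * (x.1 + 1), k * (x.2.1 + 1), seg 0)
  else (k * x.1, k * x.2.1, seg 0)

/-- `e` is a monoid endomorphism of `B_ω^𝓕` for `𝓕 = {[0),[1)}`. -/
def IsMonEnd (e : BF → BF) : Prop :=
  (∀ x ∈ Dom, e x ∈ Dom) ∧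
  e (0, 0, seg 0) = (0, 0, seg 0) ∧
  ∀ x ∈ Dom, ∀ y ∈ Dom, e (bfMul x y) = bfMul (e x) (e y)

lemma seg_inter (a b : ℕ) : seg a ∩ seg b = seg (max a b) := by
  ext x; simp [seg]

lemma shift_seg (n : ℤ) (a : ℕ) : shift n (seg a) = seg (n + a).toNat := by
  ext x
  simp only [shift, seg, Set.mem_setOf_eq]
  constructor
  · rintro ⟨k, hk, h⟩; omega
  · intro h
    refine ⟨((x : ℤ) - n).toNat, ?_, ?_⟩ <;> omega

lemma seg_eq_iff {a b : ℕ} : seg a = seg b ↔ a = b := by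
  constructor
  · intro h
    have h1 := Set.ext_iff.mp h a
    have h2 := Set.ext_iff.mp h b
    simp [seg] at h1 h2
    omega
  · rintro rfl; rfl

lemma bfMul_seg (i j p k l q : ℕ) :
    bfMul (i, j, seg p) (k, l, seg q) =
      if j ≤ k then (i + (k - j), l, seg (max ((j : ℤ) - k + p).toNat q))
      else (i, (j - k) + l, seg (max p ((k : ℤ) - j + q).toNat)) := by
  unfold bfMul
  simp only [shift_seg, seg_inter]

lemma mem_Dom_iff' {i j : ℕ} {F : Set ℕ} :
    ((i, j, F) : BF) ∈ Dom ↔ F = seg 0 ∨ F = seg 1 := by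
  simp [Dom, Fam]

/-- Every non-injective monoid endomorphism of `B_ω^𝓕` is exactly one of:
the annihilating endomorphism `γ₀ = δ₀`, some `γ_k` with `k ≥ 1`, or some `δ_k` with `k ≥ 1`. -/
theorem stmt11 (e : BF → BF) (he : IsMonEnd e) (hni : ¬ Set.InjOn e Dom) :
    (Set.EqOn e (gam 0) Dom ∨ (∃ k : ℕ, 0 < k ∧ Set.EqOn e (gam k) Dom) ∨
      (∃ k : ℕ, 0 < k ∧ Set.EqOn e (del k) Dom)) ∧
    ¬ (Set.EqOn e (gam 0) Dom ∧ ∃ k : ℕ, 0 < k ∧ Set.EqOn e (gam k) Dom) ∧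
    ¬ (Set.EqOn e (gam 0) Dom ∧ ∃ k : ℕ, 0 < k ∧ Set.EqOn e (del k) Dom) ∧
    ¬ ((∃ k : ℕ, 0 < k ∧ Set.EqOn e (gam k) Dom) ∧
        ∃ k : ℕ, 0 < k ∧ Set.EqOn e (del k) Dom) := by
  obtain ⟨hd, h1, hmul⟩ := he
  have dom0 : ∀ i j : ℕ, ((i, j, seg 0) : BF) ∈ Dom := fun i j => by simp [Dom, Fam]
  have dom1 : ∀ i j : ℕ, ((i, j, seg 1) : BF) ∈ Dom := fun i j => by simp [Dom, Fam]
  -- exclusivity parts (independent of the classification)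
  have ex1 : ¬ (Set.EqOn e (gam 0) Dom ∧ ∃ k : ℕ, 0 < k ∧ Set.EqOn e (gam k) Dom) := by
    rintro ⟨hg0, k, hk, hgk⟩
    have h1' := hg0 (dom0 1 0)
    have h2' := hgk (dom0 1 0)
    rw [h1'] at h2'
    simp [gam, Prod.mk.injEq] at h2'
    omega
  have ex2 : ¬ (Set.EqOn e (gam 0) Dom ∧ ∃ k : ℕ, 0 < k ∧ Set.EqOn e (del k) Dom) := by
    rintro ⟨hg0, k, hk, hdk⟩
    have h1' := hg0 (dom0 1 0)
    have h2' := hdk (dom0 1 0)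
    rw [h1'] at h2'
    simp [gam, del, seg_eq_iff, Prod.mk.injEq] at h2'
    omega
  have ex3 : ¬ ((∃ k : ℕ, 0 < k ∧ Set.EqOn e (gam k) Dom) ∧
      ∃ k : ℕ, 0 < k ∧ Set.EqOn e (del k) Dom) := by
    rintro ⟨⟨k, hk, hgk⟩, l, hl, hdl⟩
    have h1' := hgk (dom1 0 0)
    have h2' := hdl (dom1 0 0)
    rw [h1'] at h2'
    simp [gam, del, Prod.mk.injEq] at h2'
    omega
  refine ⟨?_, ex1, ex2, ex3⟩
  -- shapes of images of generators
  obtain ⟨⟨ia, ja, Fa⟩, hEA⟩ : ∃ p : BF, e (1, 0, seg 0) = p := ⟨_, rfl⟩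
  obtain ⟨⟨ib, jb, Fb⟩, hEB⟩ : ∃ p : BF, e (0, 1, seg 0) = p := ⟨_, rfl⟩
  obtain ⟨⟨ic, jc, Fc⟩, hEC⟩ : ∃ p : BF, e (0, 0, seg 1) = p := ⟨_, rfl⟩
  have hFa : Fa = seg 0 ∨ Fa = seg 1 := by
    have h := hd _ (dom0 1 0); rw [hEA] at h; exact mem_Dom_iff'.mp h
  have hFb : Fb = seg 0 ∨ Fb = seg 1 := by
    have h := hd _ (dom0 0 1); rw [hEB] at h; exact mem_Dom_iff'.mp h
  have hFc : Fc = seg 0 ∨ Fc = seg 1 := by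
    have h := hd _ (dom1 0 0); rw [hEC] at h; exact mem_Dom_iff'.mp h
  obtain ⟨pa, hpa, rfl⟩ : ∃ p, (p = 0 ∨ p = 1) ∧ Fa = seg p := by
    rcases hFa with h | h; exacts [⟨0, Or.inl rfl, h⟩, ⟨1, Or.inr rfl, h⟩]
  obtain ⟨pb, hpb, rfl⟩ : ∃ p, (p = 0 ∨ p = 1) ∧ Fb = seg p := by
    rcases hFb with h | h; exacts [⟨0, Or.inl rfl, h⟩, ⟨1, Or.inr rfl, h⟩]
  obtain ⟨pc, hpc, rfl⟩ : ∃ p, (p = 0 ∨ p = 1) ∧ Fc = seg p := by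
    rcases hFc with h | h; exacts [⟨0, Or.inl rfl, h⟩, ⟨1, Or.inr rfl, h⟩]
  -- b * a = 1 forces the shapes of e a, e b
  have hba : bfMul (0, 1, seg 0) (1, 0, seg 0) = ((0, 0, seg 0) : BF) := by
    rw [bfMul_seg]
    split_ifs <;> simp only [Prod.mk.injEq, seg_eq_iff, true_and, and_true] <;> omega
  have keyA : bfMul (ib, jb, seg pb) (ia, ja, seg pa) = ((0, 0, seg 0) : BF) := by
    rw [← hEA, ← hEB, ← hmul _ (dom0 0 1) _ (dom0 1 0), hba, h1]
  have hA : ja = 0 ∧ ib = 0 ∧ jb = ia ∧ pa = 0 ∧ pb = 0 := by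
    rw [bfMul_seg] at keyA
    split_ifs at keyA with hc <;>
      simp only [Prod.mk.injEq, seg_eq_iff, true_and, and_true] at keyA <;> omega
  obtain ⟨rfl, rfl, hm', rfl, rfl⟩ := hA
  rw [hm'] at hEB
  -- c is idempotent: e c = (ic, ic, seg pc)
  have hcc : bfMul (0, 0, seg 1) (0, 0, seg 1) = ((0, 0, seg 1) : BF) := by
    rw [bfMul_seg]
    split_ifs <;> simp only [Prod.mk.injEq, seg_eq_iff, true_and, and_true] <;> omega
  have keyC : bfMul (ic, jc, seg pc) (ic, jc, seg pc) = (ic, jc, seg pc) := by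
    rw [← hEC, ← hmul _ (dom1 0 0) _ (dom1 0 0), hcc, hEC]
  have hic : jc = ic := by
    rw [bfMul_seg] at keyC
    split_ifs at keyC with hc <;>
      simp only [Prod.mk.injEq, seg_eq_iff, true_and, and_true] at keyC <;> omega
  subst hic
  -- c * a = a forces ic + pc ≤ ia
  have hca : bfMul (0, 0, seg 1) (1, 0, seg 0) = ((1, 0, seg 0) : BF) := by
    rw [bfMul_seg]
    split_ifs <;> simp only [Prod.mk.injEq, seg_eq_iff, true_and, and_true] <;> omega
  have keyCA : bfMul (jc, jc, seg pc) (ia, 0, seg 0) = (ia, 0, seg 0) := by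
    rw [← hEC, ← hEA, ← hmul _ (dom1 0 0) _ (dom0 1 0), hca, hEA]
  have htm : jc + pc ≤ ia := by
    rw [bfMul_seg] at keyCA
    split_ifs at keyCA with hc <;>
      simp only [Prod.mk.injEq, seg_eq_iff, true_and, and_true] at keyCA <;> omega
  -- the general formulas
  have eRow : ∀ i : ℕ, e (i, 0, seg 0) = (ia * i, 0, seg 0) := by
    intro i
    induction i with
    | zero => simpa using h1
    | succ n ih =>
      have hs : (((n + 1 : ℕ), 0, seg 0) : BF) = bfMul (1, 0, seg 0) (n, 0, seg 0) := by
        rw [bfMul_seg]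
        split_ifs <;> simp only [Prod.mk.injEq, seg_eq_iff, true_and, and_true] <;> omega
      have hmm : ia * (n + 1) = ia * n + ia := by ring
      rw [hs, hmul _ (dom0 1 0) _ (dom0 n 0), hEA, ih, bfMul_seg]
      split_ifs <;> simp only [Prod.mk.injEq, seg_eq_iff, true_and, and_true] <;> omega
  have eCol : ∀ j : ℕ, e (0, j, seg 0) = (0, ia * j, seg 0) := by
    intro j
    induction j with
    | zero => simpa using h1
    | succ n ih =>
      have hs : ((0, (n + 1 : ℕ), seg 0) : BF) = bfMul (0, n, seg 0) (0, 1, seg 0) := by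
        rw [bfMul_seg]
        split_ifs <;> simp only [Prod.mk.injEq, seg_eq_iff, true_and, and_true] <;> omega
      have hmm : ia * (n + 1) = ia * n + ia := by ring
      rw [hs, hmul _ (dom0 0 n) _ (dom0 0 1), hEB, ih, bfMul_seg]
      split_ifs <;> simp only [Prod.mk.injEq, seg_eq_iff, true_and, and_true] <;> omega
  have eF0 : ∀ i j : ℕ, e (i, j, seg 0) = (ia * i, ia * j, seg 0) := by
    intro i j
    have hs : ((i, j, seg 0) : BF) = bfMul (i, 0, seg 0) (0, j, seg 0) := by
      rw [bfMul_seg]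
      split_ifs <;> simp only [Prod.mk.injEq, seg_eq_iff, true_and, and_true] <;> omega
    rw [hs, hmul _ (dom0 i 0) _ (dom0 0 j), eRow, eCol, bfMul_seg]
    split_ifs <;> simp only [Prod.mk.injEq, seg_eq_iff, true_and, and_true] <;> omega
  have eS1 : ∀ i : ℕ, e (i, 0, seg 1) = (ia * i + jc, jc, seg pc) := by
    intro i
    have hs : ((i, 0, seg 1) : BF) = bfMul (i, 0, seg 0) (0, 0, seg 1) := by
      rw [bfMul_seg]
      split_ifs <;> simp only [Prod.mk.injEq, seg_eq_iff, true_and, and_true] <;> omega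
    rw [hs, hmul _ (dom0 i 0) _ (dom1 0 0), eRow, hEC, bfMul_seg]
    split_ifs <;> simp only [Prod.mk.injEq, seg_eq_iff, true_and, and_true] <;> omega
  have eF1 : ∀ i j : ℕ, e (i, j, seg 1) = (ia * i + jc, ia * j + jc, seg pc) := by
    intro i j
    have hs : ((i, j, seg 1) : BF) = bfMul (i, 0, seg 1) (0, j, seg 0) := by
      rw [bfMul_seg]
      split_ifs <;> simp only [Prod.mk.injEq, seg_eq_iff, true_and, and_true] <;> omega
    rw [hs, hmul _ (dom1 i 0) _ (dom0 0 j), eS1, eCol, bfMul_seg]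
    split_ifs <;> simp only [Prod.mk.injEq, seg_eq_iff, true_and, and_true] <;> omega
  -- use non-injectivity
  rw [Set.InjOn] at hni
  push_neg at hni
  obtain ⟨x, hx, y, hy, hexy, hxy⟩ := hni
  obtain ⟨xi, xj, Fx⟩ := x
  obtain ⟨yi, yj, Fy⟩ := y
  by_cases hm0 : ia = 0
  · -- everything collapses: e = gam 0
    left
    have hic0 : jc = 0 := by omega
    have hpc0 : pc = 0 := by omega
    intro z hz
    obtain ⟨zi, zj, Fz⟩ := z
    rcases mem_Dom_iff'.mp hz with rfl | rfl
    · rw [eF0]; simp [gam, hm0]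
    · rw [eF1]; simp [gam, hm0, hic0, hpc0]
  · have hmpos : 0 < ia := Nat.pos_of_ne_zero hm0
    have concGam : jc = 0 → pc = 0 →
        Set.EqOn e (gam 0) Dom ∨ (∃ k : ℕ, 0 < k ∧ Set.EqOn e (gam k) Dom) ∨
          (∃ k : ℕ, 0 < k ∧ Set.EqOn e (del k) Dom) := by
      intro h2 h3
      refine Or.inr (Or.inl ⟨ia, hmpos, ?_⟩)
      intro z hz
      obtain ⟨zi, zj, Fz⟩ := z
      rcases mem_Dom_iff'.mp hz with rfl | rfl
      · rw [eF0]; simp [gam]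
      · rw [eF1, h2, h3]; simp [gam]
    have concDel : jc = ia → pc = 0 →
        Set.EqOn e (gam 0) Dom ∨ (∃ k : ℕ, 0 < k ∧ Set.EqOn e (gam k) Dom) ∨
          (∃ k : ℕ, 0 < k ∧ Set.EqOn e (del k) Dom) := by
      intro h2 h3
      refine Or.inr (Or.inr ⟨ia, hmpos, ?_⟩)
      intro z hz
      obtain ⟨zi, zj, Fz⟩ := z
      rcases mem_Dom_iff'.mp hz with rfl | rfl
      · rw [eF0]; simp [del, seg_eq_iff]
      · rw [eF1, h2, h3]
        have hmm1 : ia * (zi + 1) = ia * zi + ia := by ring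
        have hmm2 : ia * (zj + 1) = ia * zj + ia := by ring
        simp [del, hmm1, hmm2]
    rcases mem_Dom_iff'.mp hx with rfl | rfl <;> rcases mem_Dom_iff'.mp hy with rfl | rfl
    · -- both seg 0 : contradiction with x ≠ y
      rw [eF0, eF0] at hexy
      simp only [Prod.mk.injEq] at hexy
      exfalso
      obtain rfl : xi = yi := Nat.eq_of_mul_eq_mul_left hmpos hexy.1
      obtain rfl : xj = yj := Nat.eq_of_mul_eq_mul_left hmpos hexy.2.1
      exact hxy rfl
    · -- x seg 0, y seg 1
      rw [eF0, eF1] at hexy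
      simp only [Prod.mk.injEq, seg_eq_iff] at hexy
      obtain ⟨h1', h2', h3'⟩ := hexy
      have hms : ia * (yi + 1) = ia * yi + ia := by ring
      have hle1 : yi ≤ xi := Nat.le_of_mul_le_mul_left (by omega) hmpos
      have hle2 : xi ≤ yi + 1 := Nat.le_of_mul_le_mul_left (by omega) hmpos
      rcases (by omega : xi = yi ∨ xi = yi + 1) with h | h
      · subst h
        exact concGam (by omega) (by omega)
      · subst h
        exact concDel (by omega) (by omega)
    · -- x seg 1, y seg 0
      rw [eF1, eF0] at hexy
      simp only [Prod.mk.injEq, seg_eq_iff] at hexy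
      obtain ⟨h1', h2', h3'⟩ := hexy
      have hms : ia * (xi + 1) = ia * xi + ia := by ring
      have hle1 : xi ≤ yi := Nat.le_of_mul_le_mul_left (by omega) hmpos
      have hle2 : yi ≤ xi + 1 := Nat.le_of_mul_le_mul_left (by omega) hmpos
      rcases (by omega : yi = xi ∨ yi = xi + 1) with h | h
      · subst h
        exact concGam (by omega) (by omega)
      · subst h
        exact concDel (by omega) (by omega)
    · -- both seg 1 : contradiction with x ≠ y
      rw [eF1, eF1] at hexy
      simp only [Prod.mk.injEq] at hexy
      exfalso
      have e1 : ia * xi = ia * yi := by omega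
      have e2 : ia * xj = ia * yj := by omega
      obtain rfl : xi = yi := Nat.eq_of_mul_eq_mul_left hmpos e1
      obtain rfl : xj = yj := Nat.eq_of_mul_eq_mul_left hmpos e2
      exact hxy rfl
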